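/- There exists an optimal schedule σ* in which the earlier-schedule jobs appear in increasing index order of start times, the later-schedule jobs appear in increasing index order of start times, and every job J_j in the earlier schedule satisfies C_j(σ*) ≤ C_j(π*). -/
import Mathlib


open Finset

variable (n : ℕ)

/-- Completion time of job `j` in the original WSPT schedule `π*`:
`C_j(π*) = p_1 + ⋯ + p_j`. -/
def Corig (p : Fin n → ℤ) (j : Fin n) : ℤ :=
  ∑ i ∈ Finset.univ.filter (fun i => i ≤ j), p i

/-- Start time of job `j` in the original schedule `π*`. -/
def Sorig (p : Fin n → ℤ) (j : Fin n) : ℤ :=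
  Corig n p j - p j

/-- A feasible schedule: integer start times `σ j ≥ 0`, pairwise disjoint open
processing intervals, and every job either completes by `T1` (earlier schedule)
or starts at or after `T2` (later schedule). -/
def Feasible (p : Fin n → ℤ) (T1 T2 : ℤ) (σ : Fin n → ℤ) : Prop :=
  (∀ j, 0 ≤ σ j) ∧
  (∀ i j, i ≠ j → σ i + p i ≤ σ j ∨ σ j + p j ≤ σ i) ∧
  (∀ j, σ j + p j ≤ T1 ∨ T2 ≤ σ j)

/-- Time deviation of job `j`: `Δ_j(σ) = |C_j(σ) − C_j(π*)|`. -/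
def Dev (p : Fin n → ℤ) (σ : Fin n → ℤ) (j : Fin n) : ℤ :=
  |σ j + p j - Corig n p j|

/-- Maximum time deviation `Δ_max(σ) = max_{1≤j≤n} Δ_j(σ)` (all deviations are
nonnegative, so folding `max` from `0` gives the maximum when `n ≥ 1`). -/
def Dmax (p : Fin n → ℤ) (σ : Fin n → ℤ) : ℤ :=
  Finset.fold max 0 (Dev n p σ) Finset.univ

/-- Admissible: feasible with `Δ_max(σ) ≤ k`. -/
def Admissible (p : Fin n → ℤ) (T1 T2 k : ℤ) (σ : Fin n → ℤ) : Prop :=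
  Feasible n p T1 T2 σ ∧ Dmax n p σ ≤ k

/-- Total weighted completion time `Σ_j w_j · C_j(σ)`. -/
def WObj (p w : Fin n → ℤ) (σ : Fin n → ℤ) : ℤ :=
  ∑ j, w j * (σ j + p j)

/-- The objective `Z(σ) = μ·Δ_max(σ) + Σ_j w_j·C_j(σ)`. -/
def Zval (p w : Fin n → ℤ) (μ : ℚ) (σ : Fin n → ℤ) : ℚ :=
  μ * (Dmax n p σ : ℚ) + (WObj n p w σ : ℚ)

/-- Optimal: admissible and minimizing `Z` over all admissible schedules. -/
def Optimal (p w : Fin n → ℤ) (T1 T2 k : ℤ) (μ : ℚ) (σ : Fin n → ℤ) : Prop :=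
  Admissible n p T1 T2 k σ ∧
  ∀ τ, Admissible n p T1 T2 k τ → Zval n p w μ σ ≤ Zval n p w μ τ

/-- `t ≥ 0` is an earlier-schedule idle time unit of `σ`: no job is processed
during `[t, t+1]` and some earlier-schedule job starts at or after `t+1`. -/
def IdleUnit (p : Fin n → ℤ) (T1 : ℤ) (σ : Fin n → ℤ) (t : ℤ) : Prop :=
  0 ≤ t ∧ (∀ m, ¬(σ m ≤ t ∧ t + 1 ≤ σ m + p m)) ∧
  ∃ j, σ j + p j ≤ T1 ∧ t + 1 ≤ σ j

section Aux
variable {n : ℕ}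

lemma dev_le_dmax (p σ : Fin n → ℤ) (j : Fin n) : Dev n p σ j ≤ Dmax n p σ := by
  have h := (Finset.fold_max_le (f := Dev n p σ) (b := (0:ℤ)) (s := Finset.univ) (Dmax n p σ)).mp (le_of_eq rfl)
  exact h.2 j (mem_univ j)

lemma dmax_nonneg (p σ : Fin n → ℤ) : 0 ≤ Dmax n p σ :=
  ((Finset.fold_max_le (f := Dev n p σ) (b := (0:ℤ)) (s := Finset.univ) (Dmax n p σ)).mp (le_of_eq rfl)).1

lemma dmax_le {p σ : Fin n → ℤ} {c : ℤ} (h0 : 0 ≤ c) (h : ∀ j, Dev n p σ j ≤ c) :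
    Dmax n p σ ≤ c := (Finset.fold_max_le c).mpr ⟨h0, fun j _ => h j⟩

lemma Corig_mono {p : Fin n → ℤ} (hp : ∀ l, 0 < p l) {i j : Fin n} (h : i ≤ j) :
    Corig n p i ≤ Corig n p j := by
  apply Finset.sum_le_sum_of_subset_of_nonneg
  · intro l hl
    simp only [mem_filter, mem_univ, true_and] at *
    exact le_trans hl h
  · intro l _ _; exact (hp l).le

lemma Corig_add {p : Fin n → ℤ} (hp : ∀ l, 0 < p l) {i j : Fin n} (h : i < j) :
    Corig n p i + p j ≤ Corig n p j := by
  have hnot : j ∉ Finset.univ.filter (fun l => l ≤ i) := by simp [not_le.mpr h]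
  have heq : Corig n p i + p j = ∑ l ∈ insert j (Finset.univ.filter (fun l => l ≤ i)), p l := by
    rw [Finset.sum_insert hnot]; unfold Corig; ring
  rw [heq]
  apply Finset.sum_le_sum_of_subset_of_nonneg
  · intro l hl
    simp only [mem_insert, mem_filter, mem_univ, true_and] at *
    rcases hl with rfl | hl
    · exact le_refl _
    · exact le_trans hl h.le
  · intro l _ _; exact (hp l).le

lemma p_le_Corig {p : Fin n → ℤ} (hp : ∀ l, 0 < p l) (j : Fin n) : p j ≤ Corig n p j :=
  Finset.single_le_sum (fun l _ => (hp l).le) (by simp)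

lemma WObj_update (p w σ : Fin n → ℤ) (a : Fin n) (v : ℤ) :
    WObj n p w (Function.update σ a v) = WObj n p w σ + w a * (v - σ a) := by
  unfold WObj
  have h1 : ∀ j, w j * (Function.update σ a v j + p j)
      = Function.update (fun j => w j * (σ j + p j)) a (w a * (v + p a)) j := by
    intro j
    by_cases hj : j = a
    · subst hj; simp
    · simp [Function.update_of_ne hj]
  rw [Finset.sum_congr rfl (fun j _ => h1 j), Finset.sum_update_of_mem (mem_univ a),
    ← Finset.erase_eq]
  have h2 := Finset.sum_erase_add Finset.univ (fun j => w j * (σ j + p j)) (mem_univ a)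
  push_cast at h2 ⊢
  linarith [h2]

end Aux
def invCount {n : ℕ} (σ : Fin n → ℤ) : ℕ :=
  ((Finset.univ ×ˢ Finset.univ).filter
    (fun q : Fin n × Fin n => q.1 < q.2 ∧ σ q.2 < σ q.1)).card

section Aux2
variable {n : ℕ}

lemma exists_good_opt (p w : Fin n → ℤ) (T1 T2 k : ℤ) (μ : ℚ)
    (hk : 0 ≤ k)
    (hadm : ∃ σ, Admissible n p T1 T2 k σ) :
    ∃ σ, Admissible n p T1 T2 k σ ∧
      (∀ τ, Admissible n p T1 T2 k τ → Zval n p w μ σ ≤ Zval n p w μ τ) ∧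
      (∀ τ, Admissible n p T1 T2 k τ → Zval n p w μ τ ≤ Zval n p w μ σ →
        invCount σ ≤ invCount τ) := by
  classical
  set B : Finset (Fin n → ℤ) :=
    Fintype.piFinset (fun j => Finset.Icc 0 (Corig n p j + k - p j)) with hB
  have hmemB : ∀ τ, Admissible n p T1 T2 k τ → τ ∈ B := by
    rintro τ ⟨⟨h0, -, -⟩, hdm⟩
    rw [hB, Fintype.mem_piFinset]
    intro j
    rw [Finset.mem_Icc]
    refine ⟨h0 j, ?_⟩
    have h1 : Dev n p τ j ≤ k := le_trans (dev_le_dmax p τ j) hdm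
    have h2 : |τ j + p j - Corig n p j| ≤ k := h1
    have h3 := (abs_le.mp h2).2
    linarith
  set F : Finset (Fin n → ℤ) := B.filter (fun τ => Admissible n p T1 T2 k τ) with hF
  obtain ⟨σa, hσa⟩ := hadm
  have hFne : F.Nonempty := ⟨σa, by rw [hF, Finset.mem_filter]; exact ⟨hmemB σa hσa, hσa⟩⟩
  obtain ⟨σ1, hσ1F, hσ1min⟩ := Finset.exists_min_image F (Zval n p w μ) hFne
  set F2 : Finset (Fin n → ℤ) := F.filter (fun τ => Zval n p w μ τ ≤ Zval n p w μ σ1) with hF2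
  have hσ1F2 : σ1 ∈ F2 := by rw [hF2, Finset.mem_filter]; exact ⟨hσ1F, le_refl _⟩
  obtain ⟨σ0, hσ0F2, hσ0min⟩ := Finset.exists_min_image F2 invCount ⟨σ1, hσ1F2⟩
  rw [hF2, Finset.mem_filter] at hσ0F2
  obtain ⟨hσ0F, hσ0Z⟩ := hσ0F2
  rw [hF, Finset.mem_filter] at hσ0F
  refine ⟨σ0, hσ0F.2, ?_, ?_⟩
  · intro τ hτ
    exact le_trans hσ0Z (hσ1min τ (by rw [hF, Finset.mem_filter]; exact ⟨hmemB τ hτ, hτ⟩))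
  · intro τ hτ hτZ
    apply hσ0min
    rw [hF2, Finset.mem_filter]
    exact ⟨by rw [hF, Finset.mem_filter]; exact ⟨hmemB τ hτ, hτ⟩, le_trans hτZ hσ0Z⟩

end Aux2
section Aux3
variable {n : ℕ}

lemma shift_good (p w : Fin n → ℤ) (T1 T2 k : ℤ) (μ : ℚ) (σ : Fin n → ℤ)
    (a : Fin n) (δ : ℤ)
    (hadm : Admissible n p T1 T2 k σ) (hw : ∀ j, 0 < w j) (hμ : 0 ≤ μ)
    (hδ1 : 1 ≤ δ)
    (hpos : 0 ≤ σ a - δ)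
    (hfree : ∀ m, m ≠ a → σ m + p m ≤ σ a - δ ∨ σ a + p a ≤ σ m)
    (hwin : σ a + p a ≤ T1 ∨ T2 ≤ σ a - δ)
    (hdev : Corig n p a - Dmax n p σ ≤ σ a + p a - δ) :
    Admissible n p T1 T2 k (Function.update σ a (σ a - δ)) ∧
      Zval n p w μ (Function.update σ a (σ a - δ)) < Zval n p w μ σ := by
  classical
  obtain ⟨⟨h0, hdisj, hwin0⟩, hdm⟩ := hadm
  set σ' := Function.update σ a (σ a - δ) with hσ'
  have ha' : σ' a = σ a - δ := Function.update_self a _ σ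
  have hm' : ∀ m, m ≠ a → σ' m = σ m := fun m hm => Function.update_of_ne hm _ σ
  have hfeas : Feasible n p T1 T2 σ' := by
    refine ⟨?_, ?_, ?_⟩
    · intro j
      by_cases hj : j = a
      · subst hj; rw [ha']; exact hpos
      · rw [hm' j hj]; exact h0 j
    · intro i j hij
      by_cases hi : i = a
      · subst hi
        rw [ha', hm' j (Ne.symm hij)]
        rcases hfree j (Ne.symm hij) with h | h
        · exact Or.inr h
        · exact Or.inl (by linarith)
      · by_cases hj : j = a
        · subst hj
          rw [ha', hm' i hi]
          rcases hfree i hi with h | h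
          · exact Or.inl h
          · exact Or.inr (by linarith)
        · rw [hm' i hi, hm' j hj]; exact hdisj i j hij
    · intro j
      by_cases hj : j = a
      · subst hj
        rw [ha']
        rcases hwin with h | h
        · exact Or.inl (by linarith)
        · exact Or.inr h
      · rw [hm' j hj]; exact hwin0 j
  have hdmle : Dmax n p σ' ≤ Dmax n p σ := by
    apply dmax_le (dmax_nonneg p σ)
    intro j
    by_cases hj : j = a
    · subst hj
      have hup := (abs_le.mp (dev_le_dmax p σ j)).2
      have h2 : σ j + p j - Corig n p j ≤ Dmax n p σ := hup
      show |σ' j + p j - Corig n p j| ≤ Dmax n p σ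
      rw [ha']
      rw [abs_le]
      constructor <;> [linarith; linarith]
    · show |σ' j + p j - Corig n p j| ≤ Dmax n p σ
      rw [hm' j hj]
      exact dev_le_dmax p σ j
  have hWObj : WObj n p w σ' = WObj n p w σ - w a * δ := by
    rw [hσ', WObj_update]; ring
  constructor
  · exact ⟨hfeas, le_trans hdmle hdm⟩
  · unfold Zval
    have h1 : μ * ((Dmax n p σ' : ℤ) : ℚ) ≤ μ * ((Dmax n p σ : ℤ) : ℚ) :=
      mul_le_mul_of_nonneg_left (by exact_mod_cast hdmle) hμ
    have h2 : (0:ℤ) < w a * δ := mul_pos (hw a) (by linarith)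
    have h3 : ((WObj n p w σ' : ℤ) : ℚ) = ((WObj n p w σ : ℤ) : ℚ) - ((w a * δ : ℤ) : ℚ) := by
      rw [hWObj]; push_cast; ring
    have h4 : (0:ℚ) < ((w a * δ : ℤ) : ℚ) := by exact_mod_cast h2
    linarith
end Aux3
section Aux4
variable {n : ℕ}

lemma swap_good (p w : Fin n → ℤ) (T1 T2 k : ℤ) (μ : ℚ) (σ : Fin n → ℤ)
    (a b : Fin n) (hab : a < b)
    (hadm : Admissible n p T1 T2 k σ)
    (hp : ∀ j, 0 < p j) (hw : ∀ j, 0 < w j) (hμ : 0 ≤ μ)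
    (hwspt : p a * w b ≤ p b * w a)
    (hba : σ b + p b = σ a)
    (htri : ∀ m, m ≠ a → m ≠ b → σ m + p m ≤ σ b ∨ σ a + p a ≤ σ m)
    (hwin2 : (σ a + p a ≤ T1 ∧ σ b + p b ≤ T1) ∨ (T2 ≤ σ a ∧ T2 ≤ σ b)) :
    ∃ σ', Admissible n p T1 T2 k σ' ∧ Zval n p w μ σ' ≤ Zval n p w μ σ ∧
      invCount σ' < invCount σ := by
  classical
  obtain ⟨⟨h0, hdisj, hwin0⟩, hdm⟩ := hadm
  have hane : a ≠ b := ne_of_lt hab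
  set σ' := Function.update (Function.update σ a (σ b)) b (σ b + p a) with hσ'
  refine ⟨σ', ?_⟩
  have ha' : σ' a = σ b := by
    rw [hσ', Function.update_of_ne hane, Function.update_self]
  have hb' : σ' b = σ b + p a := by rw [hσ', Function.update_self]
  have hm' : ∀ m, m ≠ a → m ≠ b → σ' m = σ m := by
    intro m hma hmb
    rw [hσ', Function.update_of_ne hmb, Function.update_of_ne hma]
  have hpa := hp a
  have hpb := hp b
  have hσba : σ b < σ a := by linarith
  have hfeas : Feasible n p T1 T2 σ' := by
    refine ⟨?_, ?_, ?_⟩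
    · intro j
      by_cases hja : j = a
      · rw [hja, ha']; exact h0 b
      · by_cases hjb : j = b
        · rw [hjb, hb']; have := h0 b; linarith
        · rw [hm' j hja hjb]; exact h0 j
    · intro i j hij
      by_cases hia : i = a
      · by_cases hjb : j = b
        · rw [hia, hjb, ha', hb']; exact Or.inl (le_refl _)
        · have hja : j ≠ a := by rw [← hia]; exact (Ne.symm hij)
          rw [hia, ha', hm' j hja hjb]
          rcases htri j hja hjb with h | h
          · exact Or.inr h
          · exact Or.inl (by linarith)
      · by_cases hib : i = b
        · by_cases hja : j = a
          · rw [hib, hja, ha', hb']; exact Or.inr (by linarith)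
          · have hjb : j ≠ b := by rw [← hib]; exact (Ne.symm hij)
            rw [hib, hb', hm' j hja hjb]
            rcases htri j hja hjb with h | h
            · exact Or.inr (by linarith)
            · exact Or.inl (by linarith)
        · rw [hm' i hia hib]
          by_cases hja : j = a
          · rw [hja, ha']
            rcases htri i hia hib with h | h
            · exact Or.inl h
            · exact Or.inr (by linarith)
          · by_cases hjb : j = b
            · rw [hjb, hb']
              rcases htri i hia hib with h | h
              · exact Or.inl (by linarith)
              · exact Or.inr (by linarith)
            · rw [hm' j hja hjb]; exact hdisj i j hij
    · intro j
      by_cases hja : j = a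
      · rw [hja, ha']
        rcases hwin2 with ⟨h1, h2⟩ | ⟨h1, h2⟩
        · exact Or.inl (by linarith)
        · exact Or.inr h2
      · by_cases hjb : j = b
        · rw [hjb, hb']
          rcases hwin2 with ⟨h1, h2⟩ | ⟨h1, h2⟩
          · exact Or.inl (by linarith)
          · exact Or.inr (by linarith)
        · rw [hm' j hja hjb]; exact hwin0 j
  have hCab : Corig n p a + p b ≤ Corig n p b := Corig_add hp hab
  have hDa := abs_le.mp (dev_le_dmax p σ a)
  have hDb := abs_le.mp (dev_le_dmax p σ b)
  have hDa1 : -(Dmax n p σ) ≤ σ a + p a - Corig n p a := hDa.1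
  have hDa2 : σ a + p a - Corig n p a ≤ Dmax n p σ := hDa.2
  have hDb1 : -(Dmax n p σ) ≤ σ b + p b - Corig n p b := hDb.1
  have hDb2 : σ b + p b - Corig n p b ≤ Dmax n p σ := hDb.2
  have hdmle : Dmax n p σ' ≤ Dmax n p σ := by
    apply dmax_le (dmax_nonneg p σ)
    intro j
    show |σ' j + p j - Corig n p j| ≤ Dmax n p σ
    by_cases hja : j = a
    · rw [hja, ha', abs_le]
      constructor <;> linarith
    · by_cases hjb : j = b
      · rw [hjb, hb', abs_le]
        constructor <;> linarith
      · rw [hm' j hja hjb]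
        exact dev_le_dmax p σ j
  have hWObj : WObj n p w σ' ≤ WObj n p w σ := by
    have e1 : WObj n p w σ' =
        WObj n p w (Function.update σ a (σ b)) + w b * ((σ b + p a) - σ b) := by
      rw [hσ', WObj_update]
      congr 2
      rw [Function.update_of_ne (Ne.symm hane)]
    rw [e1, WObj_update]
    have hx : w b * p a ≤ w a * p b := by
      calc w b * p a = p a * w b := by ring
        _ ≤ p b * w a := hwspt
        _ = w a * p b := by ring
    have hy : σ b - σ a = -(p b) := by linarith
    rw [hy]
    nlinarith [hx]
  refine ⟨⟨hfeas, le_trans hdmle hdm⟩, ?_, ?_⟩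
  · unfold Zval
    have h1 : μ * ((Dmax n p σ' : ℤ) : ℚ) ≤ μ * ((Dmax n p σ : ℤ) : ℚ) :=
      mul_le_mul_of_nonneg_left (by exact_mod_cast hdmle) hμ
    have h3 : ((WObj n p w σ' : ℤ) : ℚ) ≤ ((WObj n p w σ : ℤ) : ℚ) := by
      exact_mod_cast hWObj
    linarith
  · unfold invCount
    apply Finset.card_lt_card
    rw [Finset.ssubset_iff_of_subset]
    · refine ⟨(a, b), ?_, ?_⟩
      · simp only [Finset.mem_filter, Finset.mem_product, Finset.mem_univ, and_self,
          true_and]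
        exact ⟨hab, hσba⟩
      · intro hmem
        rw [Finset.mem_filter] at hmem
        have h2 : σ' b < σ' a := hmem.2.2
        rw [ha', hb'] at h2
        linarith
    · intro q hq
      simp only [Finset.mem_filter, Finset.mem_product, Finset.mem_univ, and_self,
        true_and] at hq ⊢
      obtain ⟨hlt, hinv⟩ := hq
      refine ⟨hlt, ?_⟩
      obtain ⟨x, y⟩ := q
      simp only at hlt hinv ⊢
      have hpx := hp x
      have hpy := hp y
      by_cases hxa : x = a
      · by_cases hyb : y = b
        · rw [hxa, hyb, ha', hb'] at hinv; linarith
        · have hya : y ≠ a := by rw [← hxa]; exact (ne_of_gt hlt)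
          rw [hxa, ha', hm' y hya hyb] at hinv
          rw [hxa]
          rcases htri y hya hyb with h | h
          · linarith
          · linarith
      · by_cases hxb : x = b
        · have hya : y ≠ a := by
            intro hy
            rw [hxb, hy] at hlt
            exact absurd (lt_trans hab hlt) (lt_irrefl a)
          have hyb : y ≠ b := by rw [← hxb]; exact (ne_of_gt hlt)
          rw [hxb, hb', hm' y hya hyb] at hinv
          rw [hxb]
          rcases htri y hya hyb with h | h
          · linarith
          · linarith
        · rw [hm' x hxa hxb] at hinv
          by_cases hya : y = a
          · rw [hya, ha'] at hinv
            rw [hya]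
            rcases htri x hxa hxb with h | h
            · linarith
            · linarith
          · by_cases hyb : y = b
            · rw [hyb, hb'] at hinv
              rw [hyb]
              rcases htri x hxa hxb with h | h
              · linarith
              · linarith
            · rw [hm' y hya hyb] at hinv
              exact hinv
end Aux4
section Aux5
variable {n : ℕ}

lemma key_pair (p w : Fin n → ℤ) (T1 T2 k : ℤ) (μ : ℚ) (σ : Fin n → ℤ)
    (hp : ∀ j, 0 < p j) (hw : ∀ j, 0 < w j) (hμ : 0 ≤ μ)
    (hwspt : ∀ i j : Fin n, i ≤ j → p i * w j ≤ p j * w i)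
    (hadm : Admissible n p T1 T2 k σ)
    (hminZ : ∀ τ, Admissible n p T1 T2 k τ → Zval n p w μ σ ≤ Zval n p w μ τ)
    (hminI : ∀ τ, Admissible n p T1 T2 k τ → Zval n p w μ τ ≤ Zval n p w μ σ →
      invCount σ ≤ invCount τ)
    (a b : Fin n) (hab : a < b) (hba : σ b < σ a)
    (hwin2 : (σ a + p a ≤ T1 ∧ σ b + p b ≤ T1) ∨ (T2 ≤ σ a ∧ T2 ≤ σ b))
    (hcons : ∀ m, m ≠ a → m ≠ b → ¬(σ b < σ m ∧ σ m < σ a)) : False := by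
  obtain ⟨⟨h0, hdisj, hwin0⟩, hdm⟩ := hadm
  have hadm' : Admissible n p T1 T2 k σ := ⟨⟨h0, hdisj, hwin0⟩, hdm⟩
  have hpa := hp a
  have hpb := hp b
  have hCb : σ b + p b ≤ σ a := by
    rcases hdisj b a (ne_of_gt hab) with h | h
    · exact h
    · exfalso; linarith
  have htri : ∀ m, m ≠ a → m ≠ b → σ m + p m ≤ σ b ∨ σ a + p a ≤ σ m := by
    intro m hma hmb
    have hpm := hp m
    rcases hdisj m b hmb with h | h
    · exact Or.inl h
    · rcases hdisj m a hma with h2 | h2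
      · exfalso
        exact hcons m hma hmb ⟨by linarith, by linarith⟩
      · exact Or.inr h2
  rcases eq_or_lt_of_le hCb with heq | hlt
  · obtain ⟨σ', hadm2, hZ2, hI2⟩ :=
      swap_good p w T1 T2 k μ σ a b hab hadm' hp hw hμ (hwspt a b hab.le) heq htri hwin2
    have := hminI σ' hadm2 hZ2
    omega
  · have hD0 := dmax_nonneg p σ
    have hDb1 : -(Dmax n p σ) ≤ σ b + p b - Corig n p b := (abs_le.mp (dev_le_dmax p σ b)).1
    have hCab : Corig n p a + p b ≤ Corig n p b := Corig_add hp hab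
    set δ := min (σ a - (σ b + p b)) (σ a + p a - Corig n p a + Dmax n p σ) with hδ
    have hδ2 : 1 ≤ σ a + p a - Corig n p a + Dmax n p σ := by
      have : σ b + p b + p a ≤ σ a + p a := by linarith
      linarith
    have hδ1 : 1 ≤ δ := le_min (by linarith) hδ2
    have hδle1 : δ ≤ σ a - (σ b + p b) := min_le_left _ _
    have hδle2 : δ ≤ σ a + p a - Corig n p a + Dmax n p σ := min_le_right _ _
    have hfree : ∀ m, m ≠ a → σ m + p m ≤ σ a - δ ∨ σ a + p a ≤ σ m := by
      intro m hma
      by_cases hmb : m = b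
      · rw [hmb]; exact Or.inl (by linarith)
      · rcases htri m hma hmb with h | h
        · exact Or.inl (by linarith)
        · exact Or.inr h
    have hwin : σ a + p a ≤ T1 ∨ T2 ≤ σ a - δ := by
      rcases hwin2 with ⟨h1, h2⟩ | ⟨h1, h2⟩
      · exact Or.inl h1
      · exact Or.inr (by linarith)
    obtain ⟨hadm2, hZ2⟩ :=
      shift_good p w T1 T2 k μ σ a δ hadm' hw hμ hδ1 (by have := h0 b; linarith)
        hfree hwin (by linarith)
    have := hminZ _ hadm2
    linarith
end Aux5
/-- there exists an optimal schedule with both halves in WSPT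
order and every earlier-schedule job satisfying `C_j(σ*) ≤ C_j(π*)`. -/
theorem stmt_1 (n : ℕ) (p w : Fin n → ℤ) (T1 T2 k : ℤ) (μ : ℚ)
    (hn : 0 < n) (hp : ∀ j, 0 < p j) (hw : ∀ j, 0 < w j)
    (hwspt : ∀ i j : Fin n, i ≤ j → p i * w j ≤ p j * w i)
    (hT1 : 0 ≤ T1) (hT12 : T1 < T2) (hk : 0 ≤ k) (hμ : 0 ≤ μ)
    (hadm : ∃ σ, Admissible n p T1 T2 k σ) :
    ∃ σ, Optimal n p w T1 T2 k μ σ ∧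
      (∀ i j : Fin n, i < j → σ i + p i ≤ T1 → σ j + p j ≤ T1 → σ i < σ j) ∧
      (∀ i j : Fin n, i < j → T2 ≤ σ i → T2 ≤ σ j → σ i < σ j) ∧
      (∀ j, σ j + p j ≤ T1 → σ j + p j ≤ Corig n p j) := by
  classical
  obtain ⟨σ0, hadm0, hminZ, hminI⟩ := exists_good_opt p w T1 T2 k μ hk hadm
  obtain ⟨⟨h0, hdisj, hwin0⟩, hdm⟩ := hadm0
  have hadm0' : Admissible n p T1 T2 k σ0 := ⟨⟨h0, hdisj, hwin0⟩, hdm⟩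
  -- strict ordering of starts for an inverted-in-time pair
  have hstrict : ∀ i j : Fin n, i ≠ j → ¬(σ0 i < σ0 j) → σ0 j + p j ≤ σ0 i := by
    intro i j hij hlt
    rcases hdisj i j hij with h | h
    · exfalso; exact hlt (by have := hp i; linarith)
    · exact h
  -- Property 1 : early jobs ordered
  have prop1 : ∀ i j : Fin n, i < j → σ0 i + p i ≤ T1 → σ0 j + p j ≤ T1 → σ0 i < σ0 j := by
    by_contra hcon
    push_neg at hcon
    obtain ⟨i, j, hij, hie, hje, hge⟩ := hcon
    have hji : σ0 j + p j ≤ σ0 i := hstrict i j (ne_of_lt hij) (by omega)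
    set S : Finset (Fin n × Fin n) := (Finset.univ ×ˢ Finset.univ).filter
      (fun q => q.1 < q.2 ∧ σ0 q.2 < σ0 q.1 ∧ σ0 q.1 + p q.1 ≤ T1 ∧ σ0 q.2 + p q.2 ≤ T1)
      with hS
    have hSne : S.Nonempty := by
      refine ⟨(i, j), ?_⟩
      rw [hS, Finset.mem_filter]
      refine ⟨by simp, hij, by have := hp j; linarith, hie, hje⟩
    obtain ⟨q, hqS, hqmin⟩ := Finset.exists_min_image S (fun q => σ0 q.1 - σ0 q.2) hSne
    obtain ⟨a, b⟩ := q
    rw [hS, Finset.mem_filter] at hqS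
    obtain ⟨-, hab, hba, hea, heb⟩ := hqS
    refine key_pair p w T1 T2 k μ σ0 hp hw hμ hwspt hadm0' hminZ hminI a b hab hba
      (Or.inl ⟨hea, heb⟩) ?_
    rintro m hma hmb ⟨hm1, hm2⟩
    have hme : σ0 m + p m ≤ T1 := by
      rcases hwin0 m with h | h
      · exact h
      · exfalso
        have := hp a
        linarith
    rcases lt_or_gt_of_ne hmb with hmlt | hmgt
    · have : (m, b) ∈ S := by
        rw [hS, Finset.mem_filter]
        exact ⟨by simp, hmlt, hm1, hme, heb⟩
      have := hqmin (m, b) this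
      simp only at this
      linarith
    · have : (a, m) ∈ S := by
        rw [hS, Finset.mem_filter]
        exact ⟨by simp, lt_trans hab hmgt, hm2, hea, hme⟩
      have := hqmin (a, m) this
      simp only at this
      linarith
  -- Property 2 : late jobs ordered
  have prop2 : ∀ i j : Fin n, i < j → T2 ≤ σ0 i → T2 ≤ σ0 j → σ0 i < σ0 j := by
    by_contra hcon
    push_neg at hcon
    obtain ⟨i, j, hij, hie, hje, hge⟩ := hcon
    have hji : σ0 j + p j ≤ σ0 i := hstrict i j (ne_of_lt hij) (by omega)
    set S : Finset (Fin n × Fin n) := (Finset.univ ×ˢ Finset.univ).filter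
      (fun q => q.1 < q.2 ∧ σ0 q.2 < σ0 q.1 ∧ T2 ≤ σ0 q.1 ∧ T2 ≤ σ0 q.2) with hS
    have hSne : S.Nonempty := by
      refine ⟨(i, j), ?_⟩
      rw [hS, Finset.mem_filter]
      refine ⟨by simp, hij, by have := hp j; linarith, hie, hje⟩
    obtain ⟨q, hqS, hqmin⟩ := Finset.exists_min_image S (fun q => σ0 q.1 - σ0 q.2) hSne
    obtain ⟨a, b⟩ := q
    rw [hS, Finset.mem_filter] at hqS
    obtain ⟨-, hab, hba, hea, heb⟩ := hqS
    refine key_pair p w T1 T2 k μ σ0 hp hw hμ hwspt hadm0' hminZ hminI a b hab hba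
      (Or.inr ⟨hea, heb⟩) ?_
    rintro m hma hmb ⟨hm1, hm2⟩
    have hme : T2 ≤ σ0 m := by
      rcases hwin0 m with h | h
      · exfalso
        have := hp m
        linarith
      · exact h
    rcases lt_or_gt_of_ne hmb with hmlt | hmgt
    · have : (m, b) ∈ S := by
        rw [hS, Finset.mem_filter]
        exact ⟨by simp, hmlt, hm1, hme, heb⟩
      have := hqmin (m, b) this
      simp only at this
      linarith
    · have : (a, m) ∈ S := by
        rw [hS, Finset.mem_filter]
        exact ⟨by simp, lt_trans hab hmgt, hm2, hea, hme⟩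
      have := hqmin (a, m) this
      simp only at this
      linarith
  -- Property 3 : early jobs complete no later than originally
  have prop3 : ∀ j, σ0 j + p j ≤ T1 → σ0 j + p j ≤ Corig n p j := by
    by_contra hcon
    push_neg at hcon
    obtain ⟨j0, hj0e, hj0c⟩ := hcon
    set S : Finset (Fin n) := Finset.univ.filter
      (fun j => σ0 j + p j ≤ T1 ∧ Corig n p j < σ0 j + p j) with hS
    have hSne : S.Nonempty := ⟨j0, by rw [hS, Finset.mem_filter]; exact ⟨Finset.mem_univ _, hj0e, hj0c⟩⟩
    obtain ⟨a, haS, hamin⟩ := Finset.exists_min_image S id hSne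
    rw [hS, Finset.mem_filter] at haS
    obtain ⟨-, hae, hac⟩ := haS
    have hpa := hp a
    have hD0 := dmax_nonneg p σ0
    by_cases hocc : ∃ m, m ≠ a ∧ σ0 m < σ0 a ∧ σ0 a ≤ σ0 m + p m
    · obtain ⟨m, hma, hm1, hm2⟩ := hocc
      have hCm : σ0 m + p m ≤ σ0 a := by
        rcases hdisj m a hma with h | h
        · exact h
        · exfalso; linarith
      have hCmeq : σ0 m + p m = σ0 a := le_antisymm hCm hm2
      have hme : σ0 m + p m ≤ T1 := by
        rcases hwin0 m with h | h
        · exact h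
        · exfalso; linarith
      have hmlta : m < a := by
        rcases lt_or_gt_of_ne hma with h | h
        · exact h
        · exfalso
          have := prop1 a m h hae hme
          linarith
      have hCor : Corig n p m + p a ≤ Corig n p a := Corig_add hp hmlta
      have hmS : m ∈ S := by
        rw [hS, Finset.mem_filter]
        exact ⟨Finset.mem_univ _, hme, by linarith⟩
      have := hamin m hmS
      simp only [id] at this
      exact absurd hmlta (not_lt.mpr this)
    · push_neg at hocc
      have ha1 : 1 ≤ σ0 a := by
        rcases lt_or_eq_of_le (h0 a) with h | h
        · linarith
        · exfalso
          have := p_le_Corig hp a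
          rw [← h] at hac
          linarith
      have hfree : ∀ m, m ≠ a → σ0 m + p m ≤ σ0 a - 1 ∨ σ0 a + p a ≤ σ0 m := by
        intro m hma
        have hpm := hp m
        rcases hdisj m a hma with h | h
        · have hlt : σ0 m < σ0 a := by linarith
          have := hocc m hma hlt
          exact Or.inl (by linarith)
        · exact Or.inr h
      obtain ⟨hadm2, hZ2⟩ :=
        shift_good p w T1 T2 k μ σ0 a 1 hadm0' hw hμ (le_refl 1) (by linarith)
          hfree (Or.inl hae) (by linarith)
      have := hminZ _ hadm2
      linarith
  exact ⟨σ0, ⟨hadm0', hminZ⟩, prop1, prop2, prop3⟩
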